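/- Let d ≥ 2, n ≥ 1, and p, q ∈ [0,1], and suppose one of the following holds: (i) p ≤ 1/d, q ≤ 1/d and q ≤ p; (ii) p ≥ 1/d, q ≤ 1/d and p·q ≤ 1/d²; (iii) p ≥ 1/d, q ≥ 1/d and p = q. Consider the Hilbert space (ℂ^d ⊗ ℂ^d)^{⊗n}, identified with ((ℂ^d)^{⊗n})_A ⊗ ((ℂ^d)^{⊗n})_B by permuting tensor factors so that the n A-systems form one block and the n B-systems the other, and let ℳ be any set of POVMs on this space with LO(A₁…A_n : B₁…B_n) ⊆ ℳ ⊆ PPT(A₁…A_n : B₁…B_n). Then the measured max-divergence satisfies D_∞^ℳ( i(p)^{⊗n} ‖ i(q)^{⊗n} ) = n·log( (pd+1) / (qd+1) ). -/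

import Mathlib

open scoped Kronecker ComplexOrder
open Matrix Filter

noncomputable section
open scoped Classical

namespace MRD

/-- A POVM on the Hilbert space `ℂ^n` (for a finite index type `n`), over a finite
outcome alphabet `ι`. -/
structure POVM (n : Type) [Fintype n] [DecidableEq n] where
  ι : Type
  [fin : Fintype ι]
  elem : ι → Matrix n n ℂ
  pos : ∀ z, (elem z).PosSemidef
  sum_one : ∑ z, elem z = 1

attribute [instance] POVM.fin

variable {n : Type} [Fintype n] [DecidableEq n]

/-- The probability distribution induced by a state and a POVM (Born rule). -/
def POVM.dist (M : POVM n) (ρ : Matrix n n ℂ) : M.ι → ℝ :=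
  fun z => ((ρ * M.elem z).trace).re

/-- `tr2 A B = Re tr[A B]`. -/
def tr2 (A B : Matrix n n ℂ) : ℝ := ((A * B).trace).re

/-- The cone `C_ℳ` generated by a set of POVMs: the union of the conical hulls of the POVMs. -/
def cone (𝓜 : Set (POVM n)) : Set (Matrix n n ℂ) :=
  { ω | ∃ M ∈ 𝓜, ∃ lam : M.ι → ℝ, (∀ z, 0 ≤ lam z) ∧ ω = ∑ z, (lam z : ℂ) • M.elem z }

/-- Functional calculus for Hermitian matrices (junk value `0` on non-Hermitian input). -/
def hermCFC (f : ℝ → ℝ) (ω : Matrix n n ℂ) : Matrix n n ℂ :=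
  if h : ω.IsHermitian then
    (h.eigenvectorUnitary : Matrix n n ℂ) * Matrix.diagonal (fun i => (f (h.eigenvalues i) : ℂ)) *
      star (h.eigenvectorUnitary : Matrix n n ℂ)
  else 0

/-- Real powers of a (Hermitian, positive definite) matrix, via functional calculus. -/
def mpow (ω : Matrix n n ℂ) (p : ℝ) : Matrix n n ℂ := hermCFC (fun x => x ^ p) ω

/-- Logarithm of a (Hermitian, positive definite) matrix, via functional calculus. -/
def mlog (ω : Matrix n n ℂ) : Matrix n n ℂ := hermCFC Real.log ω

/-- The classical quantity `Q_α(μ‖ν) = ∑_z μ(z)^α ν(z)^(1-α)`. -/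
def Qclass {Z : Type} [Fintype Z] (α : ℝ) (μ ν : Z → ℝ) : ℝ :=
  ∑ z, μ z ^ α * ν z ^ (1 - α)

/-- `Q_α` for `α > 1`, valued in `[0,∞]`: it is `+∞` unless `μ ≪ ν`. -/
def QclassE {Z : Type} [Fintype Z] (α : ℝ) (μ ν : Z → ℝ) : EReal :=
  if ∀ z, ν z = 0 → μ z = 0 then ((Qclass α μ ν : ℝ) : EReal) else ⊤

/-- The classical max-divergence `D_∞(μ‖ν) = max_{z : μ(z) ≠ 0} log (μ(z)/ν(z))`,
with the convention `log (c/0) = +∞`. -/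
def Dmax {Z : Type} [Fintype Z] (μ ν : Z → ℝ) : EReal :=
  ⨆ z : {z : Z // μ z ≠ 0},
    (if ν z.1 = 0 then (⊤ : EReal) else ((Real.log (μ z.1 / ν z.1) : ℝ) : EReal))

/-- The classical Rényi divergence of order `α ∈ (0,∞]` (`α : EReal`), with the standard
conventions for `+∞` in the non-absolutely-continuous / orthogonal cases. -/
def rdiv {Z : Type} [Fintype Z] (α : EReal) (μ ν : Z → ℝ) : EReal :=
  if α = ⊤ then Dmax μ ν
  else if α = 1 then
    (if ∀ z, ν z = 0 → μ z = 0 then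
      (((∑ z, μ z * Real.log (μ z / ν z)) : ℝ) : EReal) else ⊤)
  else if 1 < α then
    (if ∀ z, ν z = 0 → μ z = 0 then
      (((α.toReal - 1)⁻¹ * Real.log (Qclass α.toReal μ ν) : ℝ) : EReal) else ⊤)
  else
    (if ∃ z, μ z ≠ 0 ∧ ν z ≠ 0 then
      (((α.toReal - 1)⁻¹ * Real.log (Qclass α.toReal μ ν) : ℝ) : EReal) else ⊤)

/-- The measured Rényi divergence `D_α^ℳ(ρ‖σ) = sup_{M ∈ ℳ} D_α(μ_ρ^M‖μ_σ^M)`. -/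
def mrdiv (𝓜 : Set (POVM n)) (α : EReal) (ρ σ : Matrix n n ℂ) : EReal :=
  ⨆ M ∈ 𝓜, rdiv α (M.dist ρ) (M.dist σ)

/-- The variational objective function `ν_α((ρ,σ); ω)`, for `α ∈ (0,∞]`. -/
def nuObj (α : EReal) (ρ σ ω : Matrix n n ℂ) : ℝ :=
  if α = ⊤ then Real.log (tr2 ρ ω) + 1 - tr2 σ ω
  else if α = 1 then tr2 ρ (mlog ω) + 1 - tr2 σ ω
  else if α.toReal < 1 / 2 then
    (α.toReal - 1)⁻¹ *
      Real.log (α.toReal * tr2 ρ ω + (1 - α.toReal) * tr2 σ (mpow ω (α.toReal / (α.toReal - 1))))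
  else
    (α.toReal - 1)⁻¹ *
      Real.log (α.toReal * tr2 ρ (mpow ω ((α.toReal - 1) / α.toReal)) + (1 - α.toReal) * tr2 σ ω)

section Bipartite

variable (a b : Type) [Fintype a] [DecidableEq a] [Fintype b] [DecidableEq b]

/-- A family of mutually orthogonal orthogonal projections summing to the identity. -/
def IsOrthProjFamily {ι : Type} [Fintype ι] {m : Type} [Fintype m] [DecidableEq m]
    (P : ι → Matrix m m ℂ) : Prop :=
  (∀ x, (P x).IsHermitian) ∧ (∀ x, P x * P x = P x) ∧
    (∀ x y, x ≠ y → P x * P y = 0) ∧ ∑ x, P x = 1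

/-- The class `P-LO(A:B)` of local projective measurements. -/
def PLO : Set (POVM (a × b)) :=
  { M | ∃ (X Y : Type) (_ : Fintype X) (_ : Fintype Y)
      (PA : X → Matrix a a ℂ) (PB : Y → Matrix b b ℂ) (e : M.ι ≃ X × Y),
      IsOrthProjFamily PA ∧ IsOrthProjFamily PB ∧
      ∀ z, M.elem z = PA (e z).1 ⊗ₖ PB (e z).2 }

/-- The class `LO(A:B)` of local measurements. -/
def LO : Set (POVM (a × b)) :=
  { M | ∃ (MA : POVM a) (MB : POVM b) (e : M.ι ≃ MA.ι × MB.ι),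
      ∀ z, M.elem z = MA.elem (e z).1 ⊗ₖ MB.elem (e z).2 }

/-- The partial transpose (transposition of the `B` tensor factor). -/
def ptrans {a b : Type} (X : Matrix (a × b) (a × b) ℂ) : Matrix (a × b) (a × b) ℂ :=
  Matrix.of fun x y => X (x.1, y.2) (y.1, x.2)

/-- Separable (positive semidefinite) operators: finite sums of tensor products of positive
semidefinite operators. -/
def SepMat {a b : Type} [Fintype a] [DecidableEq a] [Fintype b] [DecidableEq b]
    (ω : Matrix (a × b) (a × b) ℂ) : Prop :=
  ∃ (k : ℕ) (X : Fin k → Matrix a a ℂ) (Y : Fin k → Matrix b b ℂ),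
    (∀ z, (X z).PosSemidef) ∧ (∀ z, (Y z).PosSemidef) ∧ ω = ∑ z, X z ⊗ₖ Y z

/-- The class `SEP(A:B)`: POVMs all of whose elements are separable. -/
def SEP : Set (POVM (a × b)) := { M | ∀ z, SepMat (M.elem z) }

/-- The class `PPT(A:B)`: POVMs all of whose elements have positive semidefinite
partial transpose. -/
def PPT : Set (POVM (a × b)) := { M | ∀ z, (ptrans (M.elem z)).PosSemidef }

end Bipartite

/-- The maximally entangled state `Φ` on `ℂ^d ⊗ ℂ^d`. -/
def maxEnt (d : ℕ) : Matrix (Fin d × Fin d) (Fin d × Fin d) ℂ :=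
  Matrix.of fun x y => if x.1 = x.2 ∧ y.1 = y.2 then ((d : ℂ))⁻¹ else 0

/-- The orthogonal complement `Φ⊥ = (1 - Φ)/(d² - 1)`. -/
def maxEntPerp (d : ℕ) : Matrix (Fin d × Fin d) (Fin d × Fin d) ℂ :=
  ((d : ℂ) ^ 2 - 1)⁻¹ • (1 - maxEnt d)

/-- The isotropic state `i(q) = q Φ + (1 - q) Φ⊥`. -/
def iso (d : ℕ) (q : ℝ) : Matrix (Fin d × Fin d) (Fin d × Fin d) ℂ :=
  (q : ℂ) • maxEnt d + ((1 - q : ℝ) : ℂ) • maxEntPerp d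

/-- The `n`-fold tensor (Kronecker) power of a matrix on `ℂ^d`. -/
def tpow {d : ℕ} (ρ : Matrix (Fin d) (Fin d) ℂ) (n : ℕ) :
    Matrix (Fin n → Fin d) (Fin n → Fin d) ℂ :=
  Matrix.of fun x y => ∏ i, ρ (x i) (y i)

/-- The `n`-fold tensor power of a bipartite matrix on `ℂ^d ⊗ ℂ^d`, written on
`((ℂ^d)^{⊗n})_A ⊗ ((ℂ^d)^{⊗n})_B`, i.e. with all `A`-factors grouped into one block and all
`B`-factors into the other. -/
def tpowBip {d : ℕ} (ρ : Matrix (Fin d × Fin d) (Fin d × Fin d) ℂ) (n : ℕ) :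
    Matrix ((Fin n → Fin d) × (Fin n → Fin d)) ((Fin n → Fin d) × (Fin n → Fin d)) ℂ :=
  Matrix.of fun x y => ∏ i, ρ (x.1 i, x.2 i) (y.1 i, y.2 i)

/-- The tensor product of a matrix on `(ℂ^d)^{⊗k}` and a matrix on `(ℂ^d)^{⊗l}`, as a matrix
on `(ℂ^d)^{⊗(k+l)}`. -/
def prodElem {d k l : ℕ} (A : Matrix (Fin k → Fin d) (Fin k → Fin d) ℂ)
    (B : Matrix (Fin l → Fin d) (Fin l → Fin d) ℂ) :
    Matrix (Fin (k + l) → Fin d) (Fin (k + l) → Fin d) ℂ :=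
  Matrix.of fun x y =>
    A (fun i => x (Fin.castAdd l i)) (fun i => y (Fin.castAdd l i)) *
      B (fun j => x (Fin.natAdd k j)) (fun j => y (Fin.natAdd k j))

/-- A family `(ℳ_n)_n` of measurement sets is closed under tensor products if for all
`M_k ∈ ℳ_k` and `M_l ∈ ℳ_l` the product POVM `M_k ⊗ M_l` belongs to `ℳ_{k+l}`. -/
def TensorClosed {d : ℕ} (𝓜 : ∀ m : ℕ, Set (POVM (Fin m → Fin d))) : Prop :=
  ∀ k l : ℕ, ∀ Mk ∈ 𝓜 k, ∀ Ml ∈ 𝓜 l,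
    ∃ M ∈ 𝓜 (k + l), ∃ e : Mk.ι × Ml.ι ≃ M.ι,
      ∀ z, M.elem (e z) = prodElem (Mk.elem z.1) (Ml.elem z.2)

/-- `T` is a test available in the measurement set `𝓝`: `0 ≤ T ≤ 1` and the binary POVM
`{T, 1 - T}` belongs to `𝓝`. -/
def IsTest {m : Type} [Fintype m] [DecidableEq m] (𝓝 : Set (POVM m)) (T : Matrix m m ℂ) : Prop :=
  T.PosSemidef ∧ (1 - T).PosSemidef ∧
    ∃ M ∈ 𝓝, ∃ e : M.ι ≃ Bool, M.elem (e.symm true) = T ∧ M.elem (e.symm false) = 1 - T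

/-- Extended-real logarithm of a real number: `-∞` on `(-∞,0]`. -/
def elogr (x : ℝ) : EReal := if x ≤ 0 then ⊥ else ((Real.log x : ℝ) : EReal)

/-- Extended-real logarithm on `EReal`. -/
def elog (x : EReal) : EReal :=
  if x ≤ 0 then ⊥ else if x = ⊤ then ⊤ else ((Real.log x.toReal : ℝ) : EReal)


/-- Extra: the action of `id_m ⊗ 𝒢` on block matrices (for complete positivity). -/
def blockApply {d : ℕ} (𝒢 : Matrix (Fin d) (Fin d) ℂ →ₗ[ℂ] Matrix (Fin d) (Fin d) ℂ) (m : ℕ)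
    (X : Matrix (Fin m × Fin d) (Fin m × Fin d) ℂ) : Matrix (Fin m × Fin d) (Fin m × Fin d) ℂ :=
  Matrix.of fun p q => 𝒢 (Matrix.of fun s t => X (p.1, s) (q.1, t)) p.2 q.2



-- ===== auxiliary development =====


variable {d n : ℕ}

open scoped MatrixOrder in
lemma Matrix.posSemidef_iff_eq_transpose_mul_self {m : Type} [Fintype m] [DecidableEq m]
    {A : Matrix m m ℂ} : A.PosSemidef ↔ ∃ B : Matrix m m ℂ, A = Bᴴ * B := by
  constructor
  · intro hA
    obtain ⟨B, rfl⟩ := CStarAlgebra.nonneg_iff_eq_star_mul_self.mp hA.nonneg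
    exact ⟨B, rfl⟩
  · rintro ⟨B, rfl⟩
    exact _root_.Matrix.posSemidef_conjTranspose_mul_self B

/-- mixed tensor product over `n` sites -/
def T (d n : ℕ) (f : Fin n → Matrix (Fin d × Fin d) (Fin d × Fin d) ℂ) :
    Matrix ((Fin n → Fin d) × (Fin n → Fin d)) ((Fin n → Fin d) × (Fin n → Fin d)) ℂ :=
  Matrix.of fun x y => ∏ i, f i (x.1 i, x.2 i) (y.1 i, y.2 i)

lemma T_mul (f g : Fin n → Matrix (Fin d × Fin d) (Fin d × Fin d) ℂ) :
    T d n f * T d n g = T d n (fun i => f i * g i) := by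
  ext x y
  simp only [T, Matrix.mul_apply, Matrix.of_apply]
  have h1 : ∀ z : (Fin n → Fin d) × (Fin n → Fin d),
      (∏ i, f i (x.1 i, x.2 i) (z.1 i, z.2 i)) * ∏ i, g i (z.1 i, z.2 i) (y.1 i, y.2 i)
        = ∏ i, f i (x.1 i, x.2 i) (z.1 i, z.2 i) * g i (z.1 i, z.2 i) (y.1 i, y.2 i) := by
    intro z; rw [← Finset.prod_mul_distrib]
  simp_rw [h1]
  rw [Finset.prod_univ_sum, Fintype.piFinset_univ]
  exact Fintype.sum_equiv (Equiv.arrowProdEquivProdArrow (Fin n) (fun _ => Fin d) (fun _ => Fin d)).symm _ _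
    (fun z => rfl)

lemma T_conjTranspose (f : Fin n → Matrix (Fin d × Fin d) (Fin d × Fin d) ℂ) :
    (T d n f)ᴴ = T d n (fun i => (f i)ᴴ) := by
  ext x y
  simp [T, Matrix.conjTranspose_apply, star_prod]

lemma T_posSemidef {f : Fin n → Matrix (Fin d × Fin d) (Fin d × Fin d) ℂ}
    (hf : ∀ i, (f i).PosSemidef) : (T d n f).PosSemidef := by
  have h : ∀ i, ∃ B, f i = Bᴴ * B := fun i =>
    Matrix.posSemidef_iff_eq_transpose_mul_self.mp (hf i)
  choose B hB using h
  rw [Matrix.posSemidef_iff_eq_transpose_mul_self]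
  refine ⟨T d n B, ?_⟩
  rw [T_conjTranspose, T_mul]
  exact congrArg (T d n) (funext hB)

lemma T_smul (c : Fin n → ℂ) (f : Fin n → Matrix (Fin d × Fin d) (Fin d × Fin d) ℂ) :
    T d n (fun i => c i • f i) = (∏ i, c i) • T d n f := by
  ext x y
  simp only [T, Matrix.of_apply, Matrix.smul_apply, smul_eq_mul, Matrix.smul_apply]
  rw [← Finset.prod_mul_distrib]

lemma T_add_expand (A B : Fin n → Matrix (Fin d × Fin d) (Fin d × Fin d) ℂ) :
    T d n (fun i => A i + B i)
      = ∑ s : Fin n → Bool, T d n (fun i => cond (s i) (A i) (B i)) := by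
  ext x y
  simp only [T, Matrix.of_apply, Matrix.sum_apply, Matrix.add_apply]
  rw [show (fun i => (A i (x.1 i, x.2 i) (y.1 i, y.2 i) + B i (x.1 i, x.2 i) (y.1 i, y.2 i)))
      = fun i => ∑ b : Bool, (cond b (A i) (B i)) (x.1 i, x.2 i) (y.1 i, y.2 i) from
    funext fun i => by simp [Fintype.sum_bool]]
  rw [Finset.prod_univ_sum, Fintype.piFinset_univ]


/-- swap matrix -/
def Fm (d : ℕ) : Matrix (Fin d × Fin d) (Fin d × Fin d) ℂ :=
  Matrix.of fun x y => if x.1 = y.2 ∧ x.2 = y.1 then 1 else 0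

def Pplus (d : ℕ) : Matrix (Fin d × Fin d) (Fin d × Fin d) ℂ := (2:ℂ)⁻¹ • (1 + Fm d)
def Pminus (d : ℕ) : Matrix (Fin d × Fin d) (Fin d × Fin d) ℂ := (2:ℂ)⁻¹ • (1 - Fm d)

lemma Fm_herm (d : ℕ) : (Fm d)ᴴ = Fm d := by
  ext x y
  simp only [Fm, Matrix.conjTranspose_apply, Matrix.of_apply]
  have hiff : (y.1 = x.2 ∧ y.2 = x.1) ↔ (x.1 = y.2 ∧ x.2 = y.1) := by
    constructor <;> (rintro ⟨h1, h2⟩; exact ⟨h2.symm, h1.symm⟩)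
  simp only [hiff]
  split <;> simp

lemma Fm_mul_Fm (d : ℕ) : Fm d * Fm d = 1 := by
  ext x y
  rw [Matrix.mul_apply]
  simp only [Fm, Matrix.of_apply, ite_and]
  rw [Finset.sum_eq_single ((x.2, x.1) : Fin d × Fin d)]
  · by_cases h1 : x.1 = y.1 <;> by_cases h2 : x.2 = y.2 <;>
      simp [Matrix.one_apply, Prod.ext_iff, h1, h2, eq_comm]
  · intro b _ hb
    by_cases h1 : x.1 = b.2 <;> by_cases h2 : x.2 = b.1 <;>
      simp_all [Prod.ext_iff]
  · simp

lemma Pplus_herm (d : ℕ) : (Pplus d)ᴴ = Pplus d := by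
  simp [Pplus, Matrix.conjTranspose_smul, Fm_herm, Matrix.conjTranspose_add]

lemma Pminus_herm (d : ℕ) : (Pminus d)ᴴ = Pminus d := by
  simp [Pminus, Matrix.conjTranspose_smul, Fm_herm, Matrix.conjTranspose_sub]

lemma Pplus_mul_Pplus (d : ℕ) : Pplus d * Pplus d = Pplus d := by
  have h : (1 + Fm d) * (1 + Fm d) = (2:ℂ) • (1 + Fm d) := by
    rw [add_mul, mul_add, mul_add, one_mul, one_mul, mul_one, Fm_mul_Fm, two_smul]
    abel
  rw [Pplus, Matrix.smul_mul, Matrix.mul_smul, h, smul_smul, smul_smul]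
  norm_num

lemma Pminus_mul_Pminus (d : ℕ) : Pminus d * Pminus d = Pminus d := by
  have h : (1 - Fm d) * (1 - Fm d) = (2:ℂ) • (1 - Fm d) := by
    rw [sub_mul, mul_sub, mul_sub, one_mul, one_mul, mul_one, Fm_mul_Fm, two_smul]
    abel
  rw [Pminus, Matrix.smul_mul, Matrix.mul_smul, h, smul_smul, smul_smul]
  norm_num

lemma Pplus_psd (d : ℕ) : (Pplus d).PosSemidef := by
  rw [Matrix.posSemidef_iff_eq_transpose_mul_self]
  exact ⟨Pplus d, by rw [Pplus_herm, Pplus_mul_Pplus]⟩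

lemma Pminus_psd (d : ℕ) : (Pminus d).PosSemidef := by
  rw [Matrix.posSemidef_iff_eq_transpose_mul_self]
  exact ⟨Pminus d, by rw [Pminus_herm, Pminus_mul_Pminus]⟩

lemma ptrans_add {a b : Type} (X Y : Matrix (a × b) (a × b) ℂ) :
    ptrans (X + Y) = ptrans X + ptrans Y := rfl

lemma ptrans_sub {a b : Type} (X Y : Matrix (a × b) (a × b) ℂ) :
    ptrans (X - Y) = ptrans X - ptrans Y := rfl

lemma ptrans_smul {a b : Type} (c : ℂ) (X : Matrix (a × b) (a × b) ℂ) :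
    ptrans (c • X) = c • ptrans X := rfl

lemma ptrans_one {a b : Type} [Fintype a] [Fintype b] [DecidableEq a] [DecidableEq b] :
    ptrans (1 : Matrix (a × b) (a × b) ℂ) = 1 := by
  ext x y
  simp only [ptrans, Matrix.of_apply, Matrix.one_apply, Prod.ext_iff]
  have : (x.1 = y.1 ∧ y.2 = x.2) ↔ (x.1 = y.1 ∧ x.2 = y.2) := by
    constructor <;> (rintro ⟨u, v⟩; exact ⟨u, v.symm⟩)
  simp only [this]

lemma ptrans_maxEnt (d : ℕ) : ptrans (maxEnt d) = (d : ℂ)⁻¹ • Fm d := by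
  ext x y
  simp only [ptrans, maxEnt, Fm, Matrix.of_apply, Matrix.smul_apply, smul_eq_mul]
  have : (x.1 = y.2 ∧ y.1 = x.2) ↔ (x.1 = y.2 ∧ x.2 = y.1) := by
    constructor <;> (rintro ⟨u, v⟩; exact ⟨u, v.symm⟩)
  simp only [this]
  split <;> simp

/-- eigenvalues -/
def lamP (d : ℕ) (r : ℝ) : ℝ := (r * d + 1) / (d * (d + 1))
def lamM (d : ℕ) (r : ℝ) : ℝ := (1 - r * d) / (d * (d - 1))

lemma ptrans_iso (d : ℕ) (hd : 2 ≤ d) (r : ℝ) :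
    ptrans (iso d r) = ((lamP d r : ℝ) : ℂ) • Pplus d + ((lamM d r : ℝ) : ℂ) • Pminus d := by
  have hd0 : (d : ℂ) ≠ 0 := Nat.cast_ne_zero.mpr (by omega)
  have hd1 : (d : ℂ) + 1 ≠ 0 := by
    have : ((d + 1 : ℕ) : ℂ) ≠ 0 := Nat.cast_ne_zero.mpr (by omega)
    simpa using this
  have hdm1 : (d : ℂ) - 1 ≠ 0 := by
    intro h
    have : (d : ℂ) = 1 := by linear_combination h
    have : d = 1 := by exact_mod_cast this
    omega
  have hsq : (d : ℂ) ^ 2 - 1 ≠ 0 := by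
    have : (d:ℂ)^2 - 1 = ((d:ℂ) - 1) * ((d:ℂ) + 1) := by ring
    rw [this]
    exact mul_ne_zero hdm1 hd1
  rw [iso, maxEntPerp, ptrans_add, ptrans_smul, ptrans_smul, ptrans_smul, ptrans_sub,
    ptrans_one, ptrans_maxEnt, Pplus, Pminus, lamP, lamM]
  push_cast
  match_scalars
  · field_simp
    ring
  · field_simp
    ring


-- ===== end auxiliary =====


-- ===== chunk 3: trace and PSD generalities =====

lemma trace_ptrans_mul {a b : Type} [Fintype a] [Fintype b]
    (X M : Matrix (a × b) (a × b) ℂ) :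
    (ptrans X * ptrans M).trace = (X * M).trace := by
  simp only [Matrix.trace, Matrix.diag, Matrix.mul_apply, ptrans, Matrix.of_apply]
  have key : ∀ (f : ((a × b) × (a × b)) → ℂ), ∑ u, ∑ v, f (u, v) = ∑ z, f z := fun f =>
    (Fintype.sum_prod_type _).symm
  trans (∑ z : (a × b) × (a × b), X (z.1.1, z.2.2) (z.2.1, z.1.2) * M (z.2.1, z.1.2) (z.1.1, z.2.2))
  · exact key (fun z => X (z.1.1, z.2.2) (z.2.1, z.1.2) * M (z.2.1, z.1.2) (z.1.1, z.2.2))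
  trans (∑ z : (a × b) × (a × b), X z.1 z.2 * M z.2 z.1)
  · exact Fintype.sum_equiv
      ⟨fun z => ((z.1.1, z.2.2), (z.2.1, z.1.2)), fun z => ((z.1.1, z.2.2), (z.2.1, z.1.2)),
        fun z => rfl, fun z => rfl⟩ _ _ (fun z => rfl)
  · exact (key (fun z => X z.1 z.2 * M z.2 z.1)).symm

lemma psd_diag_nonneg {m : Type} [Fintype m] [DecidableEq m] {A : Matrix m m ℂ}
    (hA : A.PosSemidef) (i : m) : 0 ≤ A i i := by
  exact hA.diag_nonneg

lemma psd_trace_re_nonneg {m : Type} [Fintype m] [DecidableEq m] {A : Matrix m m ℂ}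
    (hA : A.PosSemidef) : 0 ≤ A.trace.re := by
  have h : (0 : ℂ) ≤ A.trace := Finset.sum_nonneg fun i _ => psd_diag_nonneg hA i
  exact (Complex.le_def.mp h).1

lemma trace_mul_re_nonneg {m : Type} [Fintype m] [DecidableEq m] {A B : Matrix m m ℂ}
    (hA : A.PosSemidef) (hB : B.PosSemidef) : 0 ≤ ((A * B).trace).re := by
  obtain ⟨C, rfl⟩ := Matrix.posSemidef_iff_eq_transpose_mul_self.mp hA
  rw [Matrix.mul_assoc, Matrix.trace_mul_comm]
  exact psd_trace_re_nonneg (hB.mul_mul_conjTranspose_same C)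

lemma psd_smul_real {m : Type} [Fintype m] [DecidableEq m] {A : Matrix m m ℂ} {r : ℝ}
    (hr : 0 ≤ r) (hA : A.PosSemidef) : (((r : ℝ) : ℂ) • A).PosSemidef := by
  constructor
  · unfold Matrix.IsHermitian
    rw [Matrix.conjTranspose_smul, hA.1.eq]
    congr 1
    simp
  · intro x
    exact (hA.smul (Complex.zero_le_real.mpr hr)).2 x

lemma psd_sum {m : Type} [Fintype m] [DecidableEq m] {ι : Type} [Fintype ι]
    (f : ι → Matrix m m ℂ) (hf : ∀ i, (f i).PosSemidef) :
    (∑ i, f i).PosSemidef := by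
  classical
  refine Finset.sum_induction f Matrix.PosSemidef (fun a b ha hb => ha.add hb)
    Matrix.PosSemidef.zero (fun i _ => hf i)

-- ===== chunk 4: iso is PSD =====

lemma maxEnt_herm (d : ℕ) : (maxEnt d)ᴴ = maxEnt d := by
  ext x y
  simp only [maxEnt, Matrix.conjTranspose_apply, Matrix.of_apply]
  have : (y.1 = y.2 ∧ x.1 = x.2) ↔ (x.1 = x.2 ∧ y.1 = y.2) := and_comm
  simp only [this]
  split <;> simp

lemma maxEnt_mul_maxEnt (d : ℕ) (hd : 2 ≤ d) : maxEnt d * maxEnt d = maxEnt d := by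
  have hd0 : (d : ℂ) ≠ 0 := Nat.cast_ne_zero.mpr (by omega)
  ext x y
  rw [Matrix.mul_apply]
  by_cases hx : x.1 = x.2 <;> by_cases hy : y.1 = y.2 <;>
    simp [maxEnt, hx, hy, Fintype.sum_prod_type, Finset.sum_ite_eq, Finset.mul_sum]
  field_simp

lemma maxEnt_psd (d : ℕ) (hd : 2 ≤ d) : (maxEnt d).PosSemidef := by
  rw [Matrix.posSemidef_iff_eq_transpose_mul_self]
  exact ⟨maxEnt d, by rw [maxEnt_herm, maxEnt_mul_maxEnt d hd]⟩

lemma one_sub_maxEnt_psd (d : ℕ) (hd : 2 ≤ d) : (1 - maxEnt d).PosSemidef := by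
  rw [Matrix.posSemidef_iff_eq_transpose_mul_self]
  refine ⟨1 - maxEnt d, ?_⟩
  rw [Matrix.conjTranspose_sub, Matrix.conjTranspose_one, maxEnt_herm]
  simp only [sub_mul, mul_sub, one_mul, mul_one, maxEnt_mul_maxEnt d hd]
  abel

lemma iso_psd (d : ℕ) (hd : 2 ≤ d) {r : ℝ} (hr : r ∈ Set.Icc (0:ℝ) 1) :
    (iso d r).PosSemidef := by
  have hsq : ((d : ℂ) ^ 2 - 1)⁻¹ = (((((d:ℝ)^2 - 1)⁻¹ : ℝ)) : ℂ) := by push_cast; ring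
  have hpos : (0:ℝ) ≤ ((d:ℝ)^2 - 1)⁻¹ := by
    have : (2:ℝ) ≤ (d:ℝ) := by exact_mod_cast hd
    have : (0:ℝ) < (d:ℝ)^2 - 1 := by nlinarith
    positivity
  rw [iso, maxEntPerp, hsq]
  refine Matrix.PosSemidef.add (psd_smul_real hr.1 (maxEnt_psd d hd)) ?_
  rw [smul_smul, ← Complex.ofReal_mul]
  exact psd_smul_real (mul_nonneg (by linarith [hr.2]) hpos) (one_sub_maxEnt_psd d hd)

-- ===== end chunks 3-4 =====


-- ===== chunk 5: key PSD dominance =====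

lemma tpowBip_eq_T {d : ℕ} (X : Matrix (Fin d × Fin d) (Fin d × Fin d) ℂ) (n : ℕ) :
    tpowBip X n = T d n (fun _ => X) := rfl

lemma ptrans_T {d n : ℕ} (X : Matrix (Fin d × Fin d) (Fin d × Fin d) ℂ) :
    ptrans (T d n (fun _ => X)) = T d n (fun _ => ptrans X) := rfl

lemma psd_T_combo (d n : ℕ) (a₁ b₁ a₂ b₂ : ℝ)
    (hle : ∀ s : Fin n → Bool,
      (∏ i, cond (s i) a₂ b₂) ≤ ∏ i, cond (s i) a₁ b₁) :
    (T d n (fun _ => ((a₁:ℝ):ℂ) • Pplus d + ((b₁:ℝ):ℂ) • Pminus d)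
      - T d n (fun _ => ((a₂:ℝ):ℂ) • Pplus d + ((b₂:ℝ):ℂ) • Pminus d)).PosSemidef := by
  have expand : ∀ a b : ℝ,
      T d n (fun _ => ((a:ℝ):ℂ) • Pplus d + ((b:ℝ):ℂ) • Pminus d)
        = ∑ s : Fin n → Bool,
            (((∏ i, cond (s i) a b : ℝ)) : ℂ) • T d n (fun i => cond (s i) (Pplus d) (Pminus d)) := by
    intro a b
    rw [T_add_expand (fun _ => ((a:ℝ):ℂ) • Pplus d) (fun _ => ((b:ℝ):ℂ) • Pminus d)]
    apply Finset.sum_congr rfl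
    intro s _
    have hfe : (fun i => cond (s i) (((a:ℝ):ℂ) • Pplus d) (((b:ℝ):ℂ) • Pminus d))
        = fun i => ((cond (s i) a b : ℝ) : ℂ) • cond (s i) (Pplus d) (Pminus d) := by
      funext i
      cases s i <;> rfl
    rw [hfe, T_smul]
    congr 1
    push_cast
    rfl
  rw [expand a₁ b₁, expand a₂ b₂, ← Finset.sum_sub_distrib]
  apply psd_sum
  intro s
  rw [← sub_smul, ← Complex.ofReal_sub]
  apply psd_smul_real (sub_nonneg.mpr (hle s))
  apply T_posSemidef
  intro i
  cases s i
  · exact Pminus_psd d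
  · exact Pplus_psd d

lemma lamP_pos (d : ℕ) (hd : 2 ≤ d) {r : ℝ} (hr : 0 ≤ r) : 0 < lamP d r := by
  have h2 : (2:ℝ) ≤ (d:ℝ) := by exact_mod_cast hd
  apply div_pos (by nlinarith) (by nlinarith)

-- the core scalar inequality
lemma coeff_le (d : ℕ) (hd : 2 ≤ d) (p q : ℝ)
    (hp : p ∈ Set.Icc (0 : ℝ) 1) (hq : q ∈ Set.Icc (0 : ℝ) 1)
    (hcond : (p ≤ 1 / d ∧ q ≤ 1 / d ∧ q ≤ p) ∨
      (1 / d ≤ p ∧ q ≤ 1 / d ∧ p * q ≤ 1 / (d : ℝ) ^ 2) ∨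
      (1 / d ≤ p ∧ 1 / d ≤ q ∧ p = q))
    (n : ℕ) (s : Fin n → Bool) :
    (∏ i, cond (s i) (lamP d p) (lamM d p))
      ≤ ∏ i, cond (s i) (((p * d + 1) / (q * d + 1)) * lamP d q)
          (((p * d + 1) / (q * d + 1)) * lamM d q) := by
  have h2 : (2:ℝ) ≤ (d:ℝ) := by exact_mod_cast hd
  have hq1 : (0:ℝ) < q * d + 1 := by nlinarith [hq.1]
  have hp1 : (0:ℝ) < p * d + 1 := by nlinarith [hp.1]
  have hD : (0:ℝ) < (d:ℝ) * ((d:ℝ) - 1) := by nlinarith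
  have hDD : (0:ℝ) < (d:ℝ) * ((d:ℝ) + 1) := by nlinarith
  set c : ℝ := (p * d + 1) / (q * d + 1) with hc
  have hcpos : 0 < c := div_pos hp1 hq1
  have hPeq : c * lamP d q = lamP d p := by
    rw [lamP, lamP, hc]
    field_simp
    exact div_self (ne_of_gt (by nlinarith [hq.1]))
  rcases hcond with ⟨h1, h2', h3⟩ | ⟨h1, h2', h3⟩ | ⟨h1, h2', h3⟩
  · -- case (i): |lamM p| ≤ c lamM q
    have key : |1 - p * d| * (q * d + 1) ≤ (p * d + 1) * (1 - q * d) := by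
      have hpd : p * (d:ℝ) ≤ 1 := by
        rw [le_div_iff₀ (by linarith : (0:ℝ) < (d:ℝ))] at h1
        linarith
      have hqd : q * (d:ℝ) ≤ 1 := by
        rw [le_div_iff₀ (by linarith : (0:ℝ) < (d:ℝ))] at h2'
        linarith
      rw [abs_of_nonneg (by linarith)]
      nlinarith
    have habs : |lamM d p| ≤ c * lamM d q := by
      rw [lamM, lamM, hc, abs_div, abs_of_pos hD, div_mul_div_comm,
        div_le_div_iff₀ hD (by positivity)]
      nlinarith [key, hD.le]
    calc (∏ i, cond (s i) (lamP d p) (lamM d p))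
        ≤ |∏ i, cond (s i) (lamP d p) (lamM d p)| := le_abs_self _
      _ = ∏ i, |cond (s i) (lamP d p) (lamM d p)| := Finset.abs_prod _ _
      _ ≤ ∏ i, cond (s i) (c * lamP d q) (c * lamM d q) := by
          apply Finset.prod_le_prod (fun i _ => abs_nonneg _)
          intro i _
          cases s i
          · simpa using habs
          · rw [cond_true, cond_true, abs_of_pos (lamP_pos d hd hp.1)]
            exact hPeq.ge
  · -- case (ii)
    have key : |1 - p * d| * (q * d + 1) ≤ (p * d + 1) * (1 - q * d) := by
      have hpd : 1 ≤ p * (d:ℝ) := by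
        rw [div_le_iff₀ (by linarith : (0:ℝ) < (d:ℝ))] at h1
        linarith
      have hqd : q * (d:ℝ) ≤ 1 := by
        rw [le_div_iff₀ (by linarith : (0:ℝ) < (d:ℝ))] at h2'
        linarith
      have hpq : p * q * (d:ℝ)^2 ≤ 1 := by
        have h3' := h3
        rw [le_div_iff₀ (by positivity : (0:ℝ) < (d:ℝ)^2)] at h3'
        nlinarith [h3']
      rw [abs_of_nonpos (by linarith)]
      nlinarith
    have habs : |lamM d p| ≤ c * lamM d q := by
      rw [lamM, lamM, hc, abs_div, abs_of_pos hD, div_mul_div_comm,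
        div_le_div_iff₀ hD (by positivity)]
      nlinarith [key, hD.le]
    calc (∏ i, cond (s i) (lamP d p) (lamM d p))
        ≤ |∏ i, cond (s i) (lamP d p) (lamM d p)| := le_abs_self _
      _ = ∏ i, |cond (s i) (lamP d p) (lamM d p)| := Finset.abs_prod _ _
      _ ≤ ∏ i, cond (s i) (c * lamP d q) (c * lamM d q) := by
          apply Finset.prod_le_prod (fun i _ => abs_nonneg _)
          intro i _
          cases s i
          · simpa using habs
          · rw [cond_true, cond_true, abs_of_pos (lamP_pos d hd hp.1)]
            exact hPeq.ge
  · -- case (iii): p = q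
    subst h3
    have hc1 : c = 1 := by rw [hc]; field_simp
    apply le_of_eq
    apply Finset.prod_congr rfl
    intro i _
    cases s i <;> simp [hc1]

-- ===== end chunk 5 =====


-- ===== chunk 6: dominance bound for PPT elements =====

lemma tpow_iso_psd (d : ℕ) (hd : 2 ≤ d) (n : ℕ) {r : ℝ} (hr : r ∈ Set.Icc (0:ℝ) 1) :
    (tpowBip (iso d r) n).PosSemidef := by
  rw [tpowBip_eq_T]
  exact T_posSemidef (fun _ => iso_psd d hd hr)

lemma dist_le (d : ℕ) (hd : 2 ≤ d) (n : ℕ) (p q : ℝ)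
    (hp : p ∈ Set.Icc (0 : ℝ) 1) (hq : q ∈ Set.Icc (0 : ℝ) 1)
    (hcond : (p ≤ 1 / d ∧ q ≤ 1 / d ∧ q ≤ p) ∨
      (1 / d ≤ p ∧ q ≤ 1 / d ∧ p * q ≤ 1 / (d : ℝ) ^ 2) ∨
      (1 / d ≤ p ∧ 1 / d ≤ q ∧ p = q))
    (E : Matrix ((Fin n → Fin d) × (Fin n → Fin d)) ((Fin n → Fin d) × (Fin n → Fin d)) ℂ)
    (hE : (ptrans E).PosSemidef) :
    ((tpowBip (iso d p) n * E).trace).re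
      ≤ ((p * (d:ℝ) + 1) / (q * (d:ℝ) + 1))^n * ((tpowBip (iso d q) n * E).trace).re := by
  set c : ℝ := (p * (d:ℝ) + 1) / (q * (d:ℝ) + 1) with hc
  set ρ := tpowBip (iso d p) n with hρ
  set σ := tpowBip (iso d q) n with hσ
  have h0 : 0 ≤ (((((c^n : ℝ)):ℂ) • σ - ρ) * E).trace.re := by
    rw [← trace_ptrans_mul]
    refine trace_mul_re_nonneg ?_ hE
    rw [ptrans_sub, ptrans_smul, hρ, hσ, tpowBip_eq_T, tpowBip_eq_T, ptrans_T, ptrans_T,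
      ptrans_iso d hd q, ptrans_iso d hd p]
    have hfe : (fun _ : Fin n => ((c * lamP d q : ℝ):ℂ) • Pplus d + ((c * lamM d q : ℝ):ℂ) • Pminus d)
        = fun _ : Fin n => ((c:ℝ):ℂ) • (((lamP d q : ℝ):ℂ) • Pplus d + ((lamM d q : ℝ):ℂ) • Pminus d) := by
      funext i
      rw [smul_add, smul_smul, smul_smul, ← Complex.ofReal_mul, ← Complex.ofReal_mul]
    have hTs : ((((c^n : ℝ)):ℂ)) • T d n (fun _ => ((lamP d q : ℝ):ℂ) • Pplus d + ((lamM d q : ℝ):ℂ) • Pminus d)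
        = T d n (fun _ => ((c * lamP d q : ℝ):ℂ) • Pplus d + ((c * lamM d q : ℝ):ℂ) • Pminus d) := by
      rw [hfe, T_smul, Finset.prod_const, Finset.card_univ, Fintype.card_fin]
      norm_cast
    rw [hTs]
    exact psd_T_combo d n (c * lamP d q) (c * lamM d q) (lamP d p) (lamM d p)
      (coeff_le d hd p q hp hq hcond n)
  have hexp : (((((c^n : ℝ)):ℂ) • σ - ρ) * E).trace.re
      = c^n * ((σ * E).trace).re - ((ρ * E).trace).re := by
    rw [Matrix.sub_mul, Matrix.smul_mul, Matrix.trace_sub, Matrix.trace_smul, smul_eq_mul]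
    simp [Complex.sub_re, Complex.mul_re, ← Complex.ofReal_pow]
  linarith [h0, hexp.symm.le, hexp.le]

-- ===== end chunk 6 =====


-- ===== chunk 7: the lower-bound local measurement =====

def gbf (d n : ℕ) (x0 : Fin d) : Bool → (Fin n → Fin d) → ℂ :=
  fun b x => cond b (if x = fun _ => x0 then 1 else 0) (1 - if x = fun _ => x0 then 1 else 0)

lemma gbf_nonneg (d n : ℕ) (x0 : Fin d) (b : Bool) (x : Fin n → Fin d) :
    0 ≤ gbf d n x0 b x := by
  cases b <;> dsimp [gbf] <;> split <;> norm_num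

def MA (d n : ℕ) (x0 : Fin d) : POVM (Fin n → Fin d) where
  ι := Bool
  elem b := Matrix.diagonal (gbf d n x0 b)
  pos b := Matrix.PosSemidef.diagonal (fun x => gbf_nonneg d n x0 b x)
  sum_one := by
    rw [Fintype.sum_bool, Matrix.diagonal_add, ← Matrix.diagonal_one]
    congr 1
    funext x
    simp only [gbf, cond_true, cond_false, Pi.one_apply]
    ring

def M0 (d n : ℕ) (x0 : Fin d) : POVM ((Fin n → Fin d) × (Fin n → Fin d)) where
  ι := Bool × Bool
  elem z := (MA d n x0).elem z.1 ⊗ₖ (MA d n x0).elem z.2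
  pos z := by
    show ((MA d n x0).elem z.1 ⊗ₖ (MA d n x0).elem z.2).PosSemidef
    rw [show (MA d n x0).elem z.1 ⊗ₖ (MA d n x0).elem z.2
        = Matrix.diagonal (fun xy => gbf d n x0 z.1 xy.1 * gbf d n x0 z.2 xy.2) from
      Matrix.diagonal_kronecker_diagonal _ _]
    exact Matrix.PosSemidef.diagonal
      (fun xy => mul_nonneg (gbf_nonneg d n x0 z.1 xy.1) (gbf_nonneg d n x0 z.2 xy.2))
  sum_one := by
    have h : ∀ b c : Bool, (MA d n x0).elem b ⊗ₖ (MA d n x0).elem c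
        = Matrix.diagonal (fun xy => gbf d n x0 b xy.1 * gbf d n x0 c xy.2) :=
      fun b c => Matrix.diagonal_kronecker_diagonal _ _
    ext u v
    simp only [Matrix.sum_apply, h, Fintype.sum_prod_type, Fintype.sum_bool]
    by_cases huv : u = v
    · subst huv
      simp only [Matrix.diagonal_apply_eq, Matrix.one_apply_eq, gbf, cond_true, cond_false]
      ring
    · simp [Matrix.diagonal_apply_ne _ huv, Matrix.one_apply_ne huv]

lemma iso_diag_entry (d : ℕ) (hd : 2 ≤ d) (r : ℝ) (x0 : Fin d) :
    iso d r (x0, x0) (x0, x0) = ((lamP d r : ℝ) : ℂ) := by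
  have hd0 : (d : ℂ) ≠ 0 := Nat.cast_ne_zero.mpr (by omega)
  have hd1 : (d : ℂ) + 1 ≠ 0 := by
    have : ((d + 1 : ℕ) : ℂ) ≠ 0 := Nat.cast_ne_zero.mpr (by omega)
    simpa using this
  have hdm1 : (d : ℂ) - 1 ≠ 0 := by
    intro h
    have : (d : ℂ) = 1 := by linear_combination h
    have : d = 1 := by exact_mod_cast this
    omega
  have hsq : (d : ℂ) ^ 2 - 1 ≠ 0 := by
    have h : (d:ℂ)^2 - 1 = ((d:ℂ) - 1) * ((d:ℂ) + 1) := by ring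
    rw [h]
    exact mul_ne_zero hdm1 hd1
  simp only [iso, maxEnt, maxEntPerp, lamP, Matrix.add_apply, Matrix.smul_apply,
    Matrix.sub_apply, Matrix.one_apply, Matrix.of_apply, smul_eq_mul, and_self, if_pos rfl,
    if_true]
  push_cast
  field_simp
  ring

lemma dist_M0 (d : ℕ) (hd : 2 ≤ d) (n : ℕ) (x0 : Fin d) (r : ℝ) :
    (M0 d n x0).dist (tpowBip (iso d r) n) (true, true) = (lamP d r)^n := by
  have hel : (M0 d n x0).elem (true, true)
      = Matrix.diagonal (fun xy : (Fin n → Fin d) × (Fin n → Fin d) =>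
          gbf d n x0 true xy.1 * gbf d n x0 true xy.2) :=
    Matrix.diagonal_kronecker_diagonal _ _
  have hg : ∀ u : (Fin n → Fin d) × (Fin n → Fin d),
      gbf d n x0 true u.1 * gbf d n x0 true u.2
        = if u = ((fun _ => x0 : Fin n → Fin d), (fun _ => x0 : Fin n → Fin d)) then 1 else 0 := by
    intro u
    by_cases h1 : u.1 = fun _ => x0 <;> by_cases h2 : u.2 = fun _ => x0 <;>
      simp [gbf, h1, h2, Prod.ext_iff]
  show ((tpowBip (iso d r) n * (M0 d n x0).elem (true, true)).trace).re = _
  rw [hel]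
  have htr : (tpowBip (iso d r) n * Matrix.diagonal (fun xy : (Fin n → Fin d) × (Fin n → Fin d) =>
      gbf d n x0 true xy.1 * gbf d n x0 true xy.2)).trace
      = tpowBip (iso d r) n ((fun _ => x0), (fun _ => x0)) ((fun _ => x0), (fun _ => x0)) := by
    simp only [Matrix.trace, Matrix.diag, Matrix.mul_diagonal]
    simp_rw [hg]
    rw [Finset.sum_congr rfl (fun u _ => by rw [mul_ite, mul_one, mul_zero])]
    rw [Finset.sum_ite_eq' Finset.univ _ (fun u => tpowBip (iso d r) n u u),
      if_pos (Finset.mem_univ _)]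
  rw [htr]
  have hprod : tpowBip (iso d r) n ((fun _ => x0), (fun _ => x0)) ((fun _ => x0), (fun _ => x0))
      = (((lamP d r : ℝ)) : ℂ)^n := by
    show (∏ _i : Fin n, iso d r (x0, x0) (x0, x0)) = _
    rw [iso_diag_entry d hd r x0, Finset.prod_const, Finset.card_univ, Fintype.card_fin]
  rw [hprod, ← Complex.ofReal_pow, Complex.ofReal_re]

lemma M0_mem_LO (d n : ℕ) (x0 : Fin d) :
    M0 d n x0 ∈ LO (Fin n → Fin d) (Fin n → Fin d) :=
  ⟨MA d n x0, MA d n x0, Equiv.refl _, fun _ => rfl⟩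

-- ===== end chunk 7 =====

theorem stmt19 (d : ℕ) (hd : 2 ≤ d) (n : ℕ) (hn : 1 ≤ n) (p q : ℝ)
    (hp : p ∈ Set.Icc (0 : ℝ) 1) (hq : q ∈ Set.Icc (0 : ℝ) 1)
    (hcond : (p ≤ 1 / d ∧ q ≤ 1 / d ∧ q ≤ p) ∨
      (1 / d ≤ p ∧ q ≤ 1 / d ∧ p * q ≤ 1 / (d : ℝ) ^ 2) ∨
      (1 / d ≤ p ∧ 1 / d ≤ q ∧ p = q))
    (𝓜 : Set (POVM ((Fin n → Fin d) × (Fin n → Fin d))))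
    (hLO : LO (Fin n → Fin d) (Fin n → Fin d) ⊆ 𝓜)
    (hPPT : 𝓜 ⊆ PPT (Fin n → Fin d) (Fin n → Fin d)) :
    mrdiv 𝓜 ⊤ (tpowBip (iso d p) n) (tpowBip (iso d q) n)
      = (((n : ℝ) * Real.log ((p * d + 1) / (q * d + 1)) : ℝ) : EReal) := by
  have h2 : (2:ℝ) ≤ (d:ℝ) := by exact_mod_cast hd
  set c : ℝ := (p * (d:ℝ) + 1) / (q * (d:ℝ) + 1) with hc
  have hq1 : (0:ℝ) < q * d + 1 := by nlinarith [hq.1]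
  have hp1 : (0:ℝ) < p * d + 1 := by nlinarith [hp.1]
  have hcpos : 0 < c := div_pos hp1 hq1
  set ρ := tpowBip (iso d p) n with hρdef
  set σ := tpowBip (iso d q) n with hσdef
  have hρpsd : ρ.PosSemidef := tpow_iso_psd d hd n hp
  have hrdiv : ∀ M : POVM ((Fin n → Fin d) × (Fin n → Fin d)),
      rdiv (⊤ : EReal) (M.dist ρ) (M.dist σ) = Dmax (M.dist ρ) (M.dist σ) := by
    intro M
    rw [rdiv, if_pos rfl]
  rw [mrdiv]
  apply le_antisymm
  · apply iSup₂_le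
    intro M hM
    rw [hrdiv M]
    rw [Dmax]
    apply iSup_le
    rintro ⟨z, hz⟩
    have hμ0 : 0 ≤ M.dist ρ z := trace_mul_re_nonneg hρpsd (M.pos z)
    have hμpos : 0 < M.dist ρ z := lt_of_le_of_ne hμ0 (Ne.symm hz)
    have hkey : M.dist ρ z ≤ c ^ n * M.dist σ z :=
      dist_le d hd n p q hp hq hcond (M.elem z) (hPPT hM z)
    have hνpos : 0 < M.dist σ z := by
      by_contra hcon
      push_neg at hcon
      nlinarith [pow_pos hcpos n, hμpos, hkey]
    rw [if_neg hνpos.ne']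
    rw [EReal.coe_le_coe_iff]
    have hdivle : M.dist ρ z / M.dist σ z ≤ c ^ n := by
      rw [div_le_iff₀ hνpos]
      linarith [hkey]
    calc Real.log (M.dist ρ z / M.dist σ z)
        ≤ Real.log (c ^ n) := Real.log_le_log (div_pos hμpos hνpos) hdivle
      _ = (n : ℝ) * Real.log c := Real.log_pow c n
  · have hd0 : 0 < d := by omega
    set x0 : Fin d := ⟨0, hd0⟩
    have hM0 : M0 d n x0 ∈ 𝓜 := hLO (M0_mem_LO d n x0)
    have hμ0 : (M0 d n x0).dist ρ (true, true) = (lamP d p)^n := dist_M0 d hd n x0 p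
    have hν0 : (M0 d n x0).dist σ (true, true) = (lamP d q)^n := dist_M0 d hd n x0 q
    have hlpp : 0 < lamP d p := lamP_pos d hd hp.1
    have hlpq : 0 < lamP d q := lamP_pos d hd hq.1
    have hμne : (M0 d n x0).dist ρ (true, true) ≠ 0 := by
      rw [hμ0]; exact (pow_pos hlpp n).ne'
    have hνne : (M0 d n x0).dist σ (true, true) ≠ 0 := by
      rw [hν0]; exact (pow_pos hlpq n).ne'
    refine le_trans ?_ (le_iSup₂_of_le (M0 d n x0) hM0 (le_refl _))
    rw [hrdiv (M0 d n x0), Dmax]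
    refine le_trans ?_
      (le_iSup (fun z : {z : Bool × Bool // (M0 d n x0).dist ρ z ≠ 0} =>
        if (M0 d n x0).dist σ z.1 = 0 then (⊤ : EReal)
        else ((Real.log ((M0 d n x0).dist ρ z.1 / (M0 d n x0).dist σ z.1) : ℝ) : EReal))
        ⟨(true, true), hμne⟩)
    rw [if_neg hνne, hμ0, hν0]
    apply le_of_eq
    rw [EReal.coe_eq_coe_iff]
    have hratio : lamP d p / lamP d q = c := by
      rw [lamP, lamP, hc]
      rw [div_div_div_comm]
      rw [div_self (by positivity : (d:ℝ) * ((d:ℝ)+1) ≠ 0), div_one]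
    rw [← div_pow, hratio, Real.log_pow]

end MRD
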